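/- Backpropagation through time matches re-rolled differentiation for one-step recurrences over ℝ: let φ : ℝ^s × ℝ^a → ℝ^s × ℝ^b be continuously differentiable, i ∈ ℝ^s, and define the unrollings ψ_0(x_0) = (φ(i, x_0)).2, ψ_{k+1}(x_0,…,x_{k+1}) = (φ(σ_{k+1}(x_0,…,x_k), x_{k+1})).2 where σ_0 = i, σ_{k+1}(x_0,…,x_k) = (φ(σ_k(x_0,…,x_{k-1}), x_k)).1. Define the derivative stateful sequence with state ℝ^s × ℝ^s, initial state (0, i), and transition ((Δs, s), (Δx, x)) ↦ (let (ds', dy) = Dφ(s, x)(Δs, Δx); (s', y) = φ(s, x) in ((ds', s'), dy)), where Dφ(p) is the Fréchet derivative of φ at p. Then the k-th output of the induced causal function of this derivative sequence on input stream of pairs (Δx_n, x_n) equals the Fréchet derivative of ψ_k at (x_0,…,x_k) applied to (Δx_0,…,Δx_k). -/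

import Mathlib

/-!
By the chain rule applied to `σ_{k+1}(x) = (φ (σ_k (Fin.init x), x_k)).1`, induction on `k` shows
that the derivative machine's state after `k` steps is `(Dσ_k(x_{<k})(Δx_{<k}), σ_k(x_{<k}))`.
Its `k`-th output is then the chain rule for `ψ_k(x) = (φ (σ_k (Fin.init x), x_k)).2`.
-/

noncomputable section

variable {s a b : ℕ}

/-- `σ` states of the unrolling. -/
def unrollState (φ : (Fin s → ℝ) × (Fin a → ℝ) → (Fin s → ℝ) × (Fin b → ℝ))
    (i : Fin s → ℝ) : ∀ k, (Fin k → (Fin a → ℝ)) → (Fin s → ℝ)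
  | 0, _ => i
  | k + 1, x => (φ (unrollState φ i k (Fin.init x), x (Fin.last k))).1

/-- The unrollings `ψ_k`. -/
def unroll (φ : (Fin s → ℝ) × (Fin a → ℝ) → (Fin s → ℝ) × (Fin b → ℝ))
    (i : Fin s → ℝ) (k : ℕ) (x : Fin (k + 1) → (Fin a → ℝ)) : Fin b → ℝ :=
  (φ (unrollState φ i k (Fin.init x), x (Fin.last k))).2

def mealyStates {A B T : Type*} (t0 : T) (ρ : T × A → T × B) (x : ℕ → A) : ℕ → T
  | 0 => t0
  | n + 1 => (ρ (mealyStates t0 ρ x n, x n)).1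

def mealyInduced {A B T : Type*} (t0 : T) (ρ : T × A → T × B) (x : ℕ → A) (n : ℕ) : B :=
  (ρ (mealyStates t0 ρ x n, x n)).2

section Calculus

variable {E F G : Type*} [NormedAddCommGroup E] [NormedSpace ℝ E] [NormedAddCommGroup F]
  [NormedSpace ℝ F] [NormedAddCommGroup G] [NormedSpace ℝ G]

theorem hasFDerivAt_init {k : ℕ} (x : Fin (k + 1) → E) :
    HasFDerivAt (Fin.init : (Fin (k + 1) → E) → Fin k → E)
      (ContinuousLinearMap.pi fun j : Fin k => ContinuousLinearMap.proj (R := ℝ) j.castSucc) x :=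
  have h := (ContinuousLinearMap.pi fun j : Fin k =>
    ContinuousLinearMap.proj (R := ℝ) (φ := fun _ => E) j.castSucc).hasFDerivAt (x := x)
  h

theorem HasFDerivAt.init_prodMk_last {k : ℕ} {f : (Fin k → E) → F} {f' : (Fin k → E) →L[ℝ] F}
    {x : Fin (k + 1) → E} (hf : HasFDerivAt f f' (Fin.init x)) :
    HasFDerivAt (fun y => (f (Fin.init y), y (Fin.last k)))
      ((f'.comp (ContinuousLinearMap.pi fun j : Fin k => ContinuousLinearMap.proj j.castSucc)).prod
        (ContinuousLinearMap.proj (Fin.last k))) x :=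
  (hf.comp x (hasFDerivAt_init x)).prodMk (hasFDerivAt_apply (Fin.last k) x)

theorem fderiv_comp_init_last_apply {k : ℕ} {g : F × E → G} {f : (Fin k → E) → F}
    {x : Fin (k + 1) → E} (hg : DifferentiableAt ℝ g (f (Fin.init x), x (Fin.last k)))
    (hf : DifferentiableAt ℝ f (Fin.init x)) (Δ : Fin (k + 1) → E) :
    fderiv ℝ (fun y => g (f (Fin.init y), y (Fin.last k))) x Δ
      = fderiv ℝ g (f (Fin.init x), x (Fin.last k))
          (fderiv ℝ f (Fin.init x) (Fin.init Δ), Δ (Fin.last k)) := by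
  rw [HasFDerivAt.fderiv (f := fun y => g (f (Fin.init y), y (Fin.last k)))
    (hg.hasFDerivAt.comp x hf.hasFDerivAt.init_prodMk_last)]
  rfl

end Calculus

def derivTransition {S A B : Type*} [NormedAddCommGroup S] [NormedSpace ℝ S]
    [NormedAddCommGroup A] [NormedSpace ℝ A] [NormedAddCommGroup B] [NormedSpace ℝ B]
    (φ : S × A → S × B) (p : (S × S) × (A × A)) : (S × S) × B :=
  let d := fderiv ℝ φ (p.1.2, p.2.2) (p.1.1, p.2.1)
  let o := φ (p.1.2, p.2.2)
  ((d.1, o.1), d.2)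

section Unrolling

variable {φ : (Fin s → ℝ) × (Fin a → ℝ) → (Fin s → ℝ) × (Fin b → ℝ)} (i : Fin s → ℝ)

theorem differentiable_unrollState (hφ : Differentiable ℝ φ) :
    ∀ k, Differentiable ℝ (unrollState φ i k)
  | 0 => differentiable_const i
  | k + 1 => fun x => by
    show DifferentiableAt ℝ (fun y => (φ (unrollState φ i k (Fin.init y), y (Fin.last k))).1) x
    exact ((hφ _).hasFDerivAt.comp x
      (differentiable_unrollState hφ k _).hasFDerivAt.init_prodMk_last).differentiableAt.fst

theorem fderiv_unrollState_succ_apply (hφ : Differentiable ℝ φ) (k : ℕ)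
    (x Δ : Fin (k + 1) → (Fin a → ℝ)) :
    fderiv ℝ (unrollState φ i (k + 1)) x Δ
      = (fderiv ℝ φ (unrollState φ i k (Fin.init x), x (Fin.last k))
          (fderiv ℝ (unrollState φ i k) (Fin.init x) (Fin.init Δ), Δ (Fin.last k))).1 := by
  have hfst := fderiv_comp_init_last_apply (g := fun p => (φ p).1) (x := x)
    (hφ _).fst (differentiable_unrollState i hφ k _) Δ
  rwa [fderiv.fst (hφ _)] at hfst

theorem fderiv_unroll_apply (hφ : Differentiable ℝ φ) (k : ℕ)
    (x Δ : Fin (k + 1) → (Fin a → ℝ)) :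
    fderiv ℝ (unroll φ i k) x Δ
      = (fderiv ℝ φ (unrollState φ i k (Fin.init x), x (Fin.last k))
          (fderiv ℝ (unrollState φ i k) (Fin.init x) (Fin.init Δ), Δ (Fin.last k))).2 := by
  have hsnd := fderiv_comp_init_last_apply (g := fun p => (φ p).2) (x := x)
    (hφ _).snd (differentiable_unrollState i hφ k _) Δ
  rwa [fderiv.snd (hφ _)] at hsnd

theorem mealyStates_derivTransition (hφ : Differentiable ℝ φ) (Δx x : ℕ → (Fin a → ℝ)) :
    ∀ k, mealyStates ((0 : Fin s → ℝ), i) (derivTransition φ) (fun n => (Δx n, x n)) k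
      = (fderiv ℝ (unrollState φ i k) (fun j : Fin k => x j) (fun j : Fin k => Δx j),
          unrollState φ i k (fun j : Fin k => x j))
  | 0 => by
    show ((0 : Fin s → ℝ), i) = (fderiv ℝ (fun _ => i) _ _, i)
    rw [fderiv_const_apply]
    rfl
  | k + 1 => by
    rw [mealyStates, mealyStates_derivTransition hφ Δx x k, fderiv_unrollState_succ_apply i hφ]
    rfl

end Unrolling

/-- Backpropagation through time matches re-rolled differentiation. -/
theorem bptt_matches_derivative
    (φ : (Fin s → ℝ) × (Fin a → ℝ) → (Fin s → ℝ) × (Fin b → ℝ))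
    (hφ : ContDiff ℝ 1 φ) (i : Fin s → ℝ)
    (Δx x : ℕ → (Fin a → ℝ)) (k : ℕ) :
    mealyInduced ((0 : Fin s → ℝ), i)
      (fun p : ((Fin s → ℝ) × (Fin s → ℝ)) × ((Fin a → ℝ) × (Fin a → ℝ)) =>
        let d := fderiv ℝ φ (p.1.2, p.2.2) (p.1.1, p.2.1)
        let o := φ (p.1.2, p.2.2)
        ((d.1, o.1), d.2))
      (fun n => (Δx n, x n)) k
      = fderiv ℝ (unroll φ i k) (fun j : Fin (k + 1) => x j)
          (fun j : Fin (k + 1) => Δx j) := by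
  have hφ' : Differentiable ℝ φ := hφ.differentiable one_ne_zero
  show (derivTransition φ (mealyStates _ (derivTransition φ) _ k, (Δx k, x k))).2 = _
  rw [mealyStates_derivTransition i hφ' Δx x k, fderiv_unroll_apply i hφ']
  rfl

end
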